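/- arXiv:math/0212250 — 5 statements merged into one kernel-verified Lean document; each statement's English description precedes it below -/
import Mathlib

section
/- There is no uncountable Polish group which is free as an abstract group: if G is a topological group whose underlying space is Polish and G admits a free generating set, then G is countable. -/
/-!
If `G` is free on an uncountable set, a countable dense subset of `G` involves only countably
many generators, so the exponent sum `φ : G → ℤ` at an unused generator vanishes on a dense set.
By Dudley's theorem a homomorphism from a completely metrizable group to `ℤ` has open, hence
closed, kernel; so `φ = 0`, which is absurd.

Dudley's theorem: if `f x ≠ 0` for some `x` in every neighbourhood of `1`, pick such `g k`
tending to `1` so fast that the infinite words `y k = g k * y (k + 1) ^ q k` converge, where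
`q k = |f (g k)| + 2`. Then `f (y k) = f (g k) + q k * f (y (k + 1))` forces
`|f (y (k + 1))| < |f (y k)|` for every `k`, impossible in `ℕ`.
-/

open Filter Topology Set TopologicalSpace

theorem exists_seq_of_forall_prefix_exists {α : Type*} {P : (m : ℕ) → (Fin m → α) → α → Prop}
    (h : ∀ m s, ∃ a, P m s a) : ∃ x : ℕ → α, ∀ m, P m (fun i => x i) (x m) := by
  choose next hnext using h
  refine ⟨Nat.strongRec fun m ih => next m fun i => ih i i.2, fun m => ?_⟩
  beta_reduce
  rw [Nat.strongRec_eq]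
  exact hnext _ _

theorem Int.natAbs_lt_natAbs_add_mul {a b : ℤ} (ha : a ≠ 0) :
    b.natAbs < (a + (a.natAbs + 2) * b).natAbs := by
  zify
  have h1 : 0 < |a| := abs_pos.mpr ha
  have h2 : |(|a| + 2) * b| ≤ |a + (|a| + 2) * b| + |a| := by
    simpa using abs_sub (a + (|a| + 2) * b) a
  rw [abs_mul, abs_of_pos (by positivity : 0 < |a| + 2)] at h2
  rcases eq_or_ne b 0 with rfl | hb
  · simpa using h1
  · nlinarith [abs_pos.mpr hb]

section NestedPow

variable {M : Type*} [Monoid M]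

/-- `nestedPow g q z n k = g k * (g (k + 1) * (⋯ * (g (k + n - 1) * z ^ q₋₁) ^ ⋯) ^ q₁) ^ q₀`
with `qᵢ = q (g (k + i))`. -/
def nestedPow (g : ℕ → M) (q : M → ℕ) (z : M) : ℕ → ℕ → M
  | 0, _ => z
  | n + 1, k => g k * nestedPow g q z n (k + 1) ^ q (g k)

variable (g : ℕ → M) (q : M → ℕ)

theorem nestedPow_succ' (z : M) (n k : ℕ) :
    nestedPow g q z (n + 1) k = nestedPow g q (g (k + n) * z ^ q (g (k + n))) n k := by
  induction n generalizing k with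
  | zero => rfl
  | succ n ih =>
    rw [nestedPow, ih, nestedPow, Nat.add_right_comm, Nat.add_assoc]

theorem nestedPow_one_succ (n k : ℕ) :
    nestedPow g q 1 (n + 1) k = nestedPow g q (g (k + n)) n k := by
  rw [nestedPow_succ', one_pow, mul_one]

theorem nestedPow_congr {g' : ℕ → M} {z : M} {n k : ℕ} (h : ∀ i, k ≤ i → i < k + n → g i = g' i) :
    nestedPow g q z n k = nestedPow g' q z n k := by
  induction n generalizing k with
  | zero => rfl
  | succ n ih =>
    rw [nestedPow, nestedPow, h k le_rfl (by omega), ih fun i hi hi' => h i (by omega) (by omega)]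

theorem continuous_nestedPow [TopologicalSpace M] [ContinuousMul M] (n k : ℕ) :
    Continuous fun z => nestedPow g q z n k := by
  induction n generalizing k with
  | zero => exact continuous_id
  | succ n ih => exact continuous_const.mul ((ih (k + 1)).pow _)

theorem exists_seq_dist_nestedPow_lt [MetricSpace M] [ContinuousMul M] {A : Set M}
    (hA : (1 : M) ∈ closure A) {ε : ℕ → ℝ} (hε : ∀ m, 0 < ε m) :
    ∃ g : ℕ → M, (∀ m, g m ∈ A) ∧
      ∀ k n, dist (nestedPow g q 1 (n + 1) k) (nestedPow g q 1 n k) < ε (k + n) := by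
  let extend (m : ℕ) (s : Fin m → M) (i : ℕ) : M := if h : i < m then s ⟨i, h⟩ else 1
  obtain ⟨g, hg⟩ := exists_seq_of_forall_prefix_exists (P := fun m s z => z ∈ A ∧
      ∀ k ≤ m, dist (nestedPow (extend m s) q z (m - k) k)
        (nestedPow (extend m s) q 1 (m - k) k) < ε m) fun m s => by
    have hnhds : ∀ᶠ z in 𝓝 (1 : M), ∀ k ≤ m, dist (nestedPow (extend m s) q z (m - k) k)
        (nestedPow (extend m s) q 1 (m - k) k) < ε m :=
      (Filter.eventually_all_finite (finite_le_nat m)).mpr fun k _ =>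
        ((continuous_nestedPow _ q _ k).tendsto 1).eventually (Metric.ball_mem_nhds _ (hε m))
    obtain ⟨z, hz, hzA⟩ := mem_closure_iff_nhds.mp hA _ hnhds
    exact ⟨z, hzA, hz⟩
  refine ⟨g, fun m => (hg m).1, fun k n => ?_⟩
  have hprefix : ∀ z, nestedPow (extend (k + n) fun i => g i) q z n k = nestedPow g q z n k :=
    fun z => nestedPow_congr _ q fun i _ hi => dif_pos hi
  simpa [nestedPow_one_succ, hprefix] using (hg (k + n)).2 k (by omega)

end NestedPow

theorem MonoidHom.eventually_nhds_one_apply_eq_one {M : Type*} [Monoid M] [TopologicalSpace M]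
    [ContinuousMul M] [IsCompletelyMetrizableSpace M] (f : M →* Multiplicative ℤ) :
    ∀ᶠ x in 𝓝 (1 : M), f x = 1 := by
  by_contra hf
  have hA : (1 : M) ∈ closure {x | f x ≠ 1} :=
    mem_closure_iff_frequently.mpr (not_eventually.mp hf)
  let := upgradeIsCompletelyMetrizable M
  let a (x : M) : ℤ := Multiplicative.toAdd (f x)
  let q (x : M) : ℕ := (a x).natAbs + 2
  obtain ⟨g, hgA, hg⟩ := exists_seq_dist_nestedPow_lt q hA (ε := fun m => (1 / 2 : ℝ) ^ m)
    fun m => by positivity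
  have hlim : ∀ k, ∃ y, Tendsto (fun n => nestedPow g q 1 n k) atTop (𝓝 y) := fun k =>
    cauchySeq_tendsto_of_complete <| cauchySeq_of_le_geometric (1 / 2) ((1 / 2) ^ k)
      (by norm_num) fun n => by rw [dist_comm, ← pow_add]; exact (hg k n).le
  choose y hy using hlim
  have hy_succ (k : ℕ) : y k = g k * y (k + 1) ^ q (g k) :=
    tendsto_nhds_unique ((hy k).comp (tendsto_add_atTop_nat 1))
      (tendsto_const_nhds.mul ((hy (k + 1)).pow _))
  have hdecr : StrictAnti fun k => (a (y k)).natAbs := strictAnti_nat_of_succ_lt fun k => by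
    have hgk : a (g k) ≠ 0 := hgA k
    simpa [hy_succ k, a, q] using Int.natAbs_lt_natAbs_add_mul (b := a (y (k + 1))) hgk
  exact not_strictAnti_of_wellFoundedLT _ hdecr

theorem Subgroup.exists_finite_mem_closure_image {G ι : Type*} [Group G] {v : ι → G} {g : G}
    (hg : g ∈ closure (range v)) : ∃ T : Set ι, T.Finite ∧ g ∈ closure (v '' T) := by
  induction hg using Subgroup.closure_induction with
  | mem x hx =>
    obtain ⟨i, rfl⟩ := hx
    exact ⟨{i}, finite_singleton i, subset_closure (mem_image_of_mem v rfl)⟩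
  | one => exact ⟨∅, finite_empty, one_mem _⟩
  | mul x y _ _ hx hy =>
    obtain ⟨S, hS, hxS⟩ := hx
    obtain ⟨T, hT, hyT⟩ := hy
    exact ⟨S ∪ T, hS.union hT, mul_mem (closure_mono (image_mono subset_union_left) hxS)
      (closure_mono (image_mono subset_union_right) hyT)⟩
  | inv x _ hx =>
    obtain ⟨T, hT, hxT⟩ := hx
    exact ⟨T, hT, inv_mem hxT⟩

theorem FreeGroup.exists_ne_one_forall_eq_one {α : Type*} (hα : ¬Countable α)
    {D : Set (FreeGroup α)} (hD : D.Countable) :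
    ∃ φ : FreeGroup α →* Multiplicative ℤ, φ ≠ 1 ∧ ∀ d ∈ D, φ d = 1 := by
  classical
  choose T hT hdT using fun d : FreeGroup α =>
    Subgroup.exists_finite_mem_closure_image (closure_range_of α ▸ Subgroup.mem_top d)
  obtain ⟨a, ha⟩ : ∃ a, a ∉ ⋃ d ∈ D, T d := by
    by_contra! h
    exact hα <| countable_univ_iff.mp <|
      (hD.biUnion fun d _ => (hT d).countable).mono fun x _ => h x
  refine ⟨FreeGroup.lift (Pi.mulSingle a (Multiplicative.ofAdd 1)), fun h => ?_, fun d hd => ?_⟩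
  · simpa using DFunLike.congr_fun h (of a)
  · refine (Subgroup.closure_le (MonoidHom.ker _)).mpr ?_ (hdT d)
    rintro _ ⟨b, hb, rfl⟩
    have hba : b ≠ a := fun hab => ha (mem_biUnion hd (hab ▸ hb))
    simp [hba]

theorem MonoidHom.eq_one_of_dense {G : Type*} [Group G] [TopologicalSpace G]
    [IsTopologicalGroup G] [IsCompletelyMetrizableSpace G] (f : G →* Multiplicative ℤ)
    {D : Set G} (hD : Dense D) (hf : ∀ d ∈ D, f d = 1) : f = 1 := by
  have hopen : IsOpen (f.ker : Set G) :=
    f.ker.isOpen_of_mem_nhds f.eventually_nhds_one_apply_eq_one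
  have hker : closure D ⊆ f.ker := closure_minimal hf (f.ker.isClosed_of_isOpen hopen)
  ext x
  exact hker (hD.closure_eq ▸ mem_univ x)

/-- There is no uncountable Polish group which is free as an abstract group:
a topological group whose underlying space is Polish and which admits a free
generating set is countable. -/
theorem no_uncountable_free_polish_group
    (G : Type*) [Group G] [TopologicalSpace G] [IsTopologicalGroup G] [PolishSpace G]
    (hfree : IsFreeGroup G) : Countable G := by
  by_contra hG
  let e : G ≃* FreeGroup (IsFreeGroup.Generators G) := IsFreeGroup.toFreeGroup G
  have hgen : ¬Countable (IsFreeGroup.Generators G) := fun _ =>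
    hG (Countable.of_equiv _ e.symm.toEquiv)
  obtain ⟨D, hDc, hD⟩ := exists_countable_dense G
  obtain ⟨φ, hφ, hφD⟩ := FreeGroup.exists_ne_one_forall_eq_one hgen (hDc.image e)
  have hφe : φ.comp e.toMonoidHom = 1 :=
    (φ.comp e.toMonoidHom).eq_one_of_dense hD fun d hd => hφD (e d) (mem_image_of_mem e hd)
  exact hφ <| MonoidHom.ext fun x => by simpa using DFunLike.congr_fun hφe (e.symm x)
end

section
/- Let G be a group equipped with a metric d such that (G,d) is a complete metric space and the maps (x,y) ↦ x·y and x ↦ x⁻¹ are continuous for the topology induced by d. If the topology induced by d on G is not discrete, then G is not a free group. -/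
/-!
A homomorphism `φ` from a complete metric group to a free group has open kernel (Dudley).
Otherwise choose `hₙ ∉ ker φ` tending to `1` so fast that the nested products
`gₙ = hₙ (hₙ₊₁ (hₙ₊₂ ⋯) ^ pₙ₊₁) ^ pₙ` converge, where `pₙ > n + ∑_{i ≤ n} |φ hᵢ|`.
In a free group `|x| ≤ |x ^ p|` for `p ≠ 0`, and `p ≤ |x ^ p|` for `x ≠ 1`, because a power of a
cyclically reduced word is reduced. From `gₙ = hₙ gₙ₊₁ ^ pₙ` one gets
`|φ gₙ| ≤ |φ g₀| + ∑_{i < n} |φ hᵢ|`, hence `φ gₙ₊₁ = 1` as soon as `n ≥ |φ g₀|`, and then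
`φ hₙ₊₁ = 1`. For a free group `G` itself this makes `{1}` open.
-/

open Filter Topology

namespace FreeGroup

variable {α : Type*} [DecidableEq α]

open reduceCyclically

theorem norm_pow (x : FreeGroup α) {n : ℕ} (hn : n ≠ 0) :
    norm (x ^ n) =
      2 * (conjugator x.toWord).length + n * (reduceCyclically x.toWord).length := by
  simp [norm, toWord_pow, reduce_flatten_replicate isReduced_toWord, hn]
  ring

theorem norm_le_norm_pow (x : FreeGroup α) {n : ℕ} (hn : n ≠ 0) : norm x ≤ norm (x ^ n) := by
  have h1 := norm_pow x one_ne_zero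
  rw [pow_one] at h1
  rw [h1, norm_pow x hn]
  have hn1 : 1 ≤ n := Nat.one_le_iff_ne_zero.2 hn
  nlinarith

theorem reduceCyclically_toWord_ne_nil {x : FreeGroup α} (hx : x ≠ 1) :
    reduceCyclically x.toWord ≠ [] := by
  intro h
  apply hx
  have hsq : x ^ 2 = x := by
    apply toWord_injective
    rw [toWord_pow, reduce_flatten_replicate isReduced_toWord]
    simpa [h] using conj_conjugator_reduceCyclically x.toWord
  simpa [pow_two] using hsq

theorem le_norm_pow {x : FreeGroup α} (hx : x ≠ 1) (n : ℕ) : n ≤ norm (x ^ n) := by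
  rcases eq_or_ne n 0 with rfl | hn
  · exact Nat.zero_le _
  rw [norm_pow x hn]
  have hcore := List.length_pos_iff.2 (reduceCyclically_toWord_ne_nil hx)
  nlinarith

theorem exists_eq_one_of_eq_mul_pow {g h : ℕ → FreeGroup α} {p : ℕ → ℕ}
    (hp : ∀ n, ∑ i ∈ Finset.range (n + 1), norm (h i) + n < p n)
    (hg : ∀ n, g n = h n * g (n + 1) ^ p n) : ∃ n, h n = 1 := by
  have hpow n : norm (g (n + 1) ^ p n) ≤ norm (h n) + norm (g n) := by
    rw [← norm_inv_eq (x := h n), ← inv_mul_cancel_left (h n) (g (n + 1) ^ p n), ← hg n]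
    exact norm_mul_le _ _
  have hgrowth n : norm (g n) ≤ norm (g 0) + ∑ i ∈ Finset.range n, norm (h i) := by
    induction n with
    | zero => simp
    | succ n ih =>
      have hstep := (norm_le_norm_pow (g (n + 1)) (by have := hp n; omega)).trans (hpow n)
      rw [Finset.sum_range_succ]
      omega
  have hone n (hn : norm (g 0) ≤ n) : g (n + 1) = 1 := by
    by_contra hne
    have hlow := (le_norm_pow hne (p n)).trans (hpow n)
    have hup := hgrowth n
    have hpn := hp n
    rw [Finset.sum_range_succ] at hpn
    omega
  refine ⟨norm (g 0) + 1, ?_⟩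
  have := hg (norm (g 0) + 1)
  rwa [hone _ le_rfl, hone _ (by omega), one_pow, mul_one, eq_comm] at this

end FreeGroup

theorem exists_seq_eq_ofFn {β : Type*} (next : List β → β) :
    ∃ s : ℕ → β, ∀ n, s n = next (List.ofFn fun i : Fin n => s i) :=
  ⟨Nat.strongRec fun n s => next (List.ofFn fun i : Fin n => s i i.2),
    fun n => Nat.strongRec_eq _ n⟩

section MulPowFold

variable {G : Type*} [Monoid G]

def mulPowFold (l : List (G × ℕ)) (y : G) : G :=
  l.foldr (fun a z => a.1 * z ^ a.2) y

theorem mulPowFold_append_singleton (l : List (G × ℕ)) (a : G × ℕ) :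
    mulPowFold (l ++ [a]) 1 = mulPowFold l a.1 := by
  simp [mulPowFold]

theorem continuous_mulPowFold [TopologicalSpace G] [ContinuousMul G] (l : List (G × ℕ)) :
    Continuous (mulPowFold l) := by
  induction l with
  | nil => exact continuous_id
  | cons a l ih => exact continuous_const.mul (ih.pow a.2)

variable [MetricSpace G] [ContinuousMul G] {S : Set G}

theorem exists_mem_forall_tails_dist_mulPowFold_lt (hS : (1 : G) ∈ closure S)
    (L : List (G × ℕ)) {ε : ℝ} (hε : 0 < ε) :
    ∃ a ∈ S, ∀ T ∈ L.tails, dist (mulPowFold T a) (mulPowFold T 1) < ε := by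
  have hnear : ∀ᶠ y in 𝓝 (1 : G), ∀ T ∈ L.tails, dist (mulPowFold T y) (mulPowFold T 1) < ε :=
    L.tails.finite_toSet.eventually_all.2 fun T _ =>
      Metric.tendsto_nhds.1 ((continuous_mulPowFold T).tendsto 1) ε hε
  obtain ⟨a, ha, haS⟩ := (hnear.and_frequently (mem_closure_iff_frequently.1 hS)).exists
  exact ⟨a, haS, ha⟩

theorem exists_eq_mul_pow_of_dist_mulPowFold_le [CompleteSpace G] (s : ℕ → G × ℕ)
    (hs : ∀ k, ∀ T ∈ (List.ofFn fun i : Fin k => s i).tails,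
      dist (mulPowFold T (s k).1) (mulPowFold T 1) ≤ (1 / 2) ^ k) :
    ∃ g : ℕ → G, ∀ n, g n = (s n).1 * g (n + 1) ^ (s n).2 := by
  obtain ⟨P, hPdef⟩ : ∃ P : ℕ → List (G × ℕ), ∀ k, P k = List.ofFn fun i : Fin k => s i :=
    ⟨_, fun _ => rfl⟩
  simp only [← hPdef] at hs
  have hlen k : (P k).length = k := by simp [hPdef]
  set x : ℕ → ℕ → G := fun n k => mulPowFold ((P k).drop n) 1 with hxdef
  have hstep n k : dist (x n k) (x n (k + 1)) ≤ 1 * (1 / 2) ^ k := by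
    have hP : P (k + 1) = P k ++ [s k] := by
      rw [hPdef, hPdef, List.ofFn_succ', List.concat_eq_append]
      rfl
    simp only [hxdef, hP, List.drop_append, hlen]
    rcases le_or_gt n k with hnk | hkn
    · rw [Nat.sub_eq_zero_of_le hnk, List.drop_zero, mulPowFold_append_singleton, dist_comm,
        one_mul]
      exact hs k _ ((List.mem_tails _ _).2 (List.drop_suffix n _))
    · rw [List.drop_eq_nil_of_le (by rw [hlen]; omega),
        List.drop_eq_nil_of_le (by simp only [List.length_singleton]; omega)]
      simp
  choose g hg using fun n => cauchySeq_tendsto_of_complete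
    (cauchySeq_of_le_geometric (1 / 2) 1 (by norm_num) (hstep n))
  refine ⟨g, fun n => tendsto_nhds_unique (hg n) ?_⟩
  have hx : ∀ᶠ k in atTop, (s n).1 * x (n + 1) k ^ (s n).2 = x n k :=
    (eventually_gt_atTop n).mono fun k hk => by
      simp only [hxdef]
      conv_rhs => rw [List.drop_eq_getElem_cons (by rwa [hlen])]
      simp [mulPowFold, hPdef]
  exact (((continuous_const.mul (continuous_pow _)).tendsto _).comp (hg (n + 1))).congr' hx

theorem exists_seq_eq_mul_pow_of_one_mem_closure [CompleteSpace G] (hS : (1 : G) ∈ closure S)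
    (q : List G → ℕ) :
    ∃ h g : ℕ → G, (∀ n, h n ∈ S) ∧
      ∀ n, g n = h n * g (n + 1) ^ q (List.ofFn fun i : Fin (n + 1) => h i) := by
  choose c hcS hc using fun L : List (G × ℕ) =>
    exists_mem_forall_tails_dist_mulPowFold_lt hS L (ε := (1 / 2) ^ L.length) (by positivity)
  obtain ⟨s, hs⟩ := exists_seq_eq_ofFn fun L => (c L, q (L.map Prod.fst ++ [c L]))
  have hfst k : (s k).1 = c (List.ofFn fun i : Fin k => s i) := by rw [hs k]
  obtain ⟨g, hg⟩ := exists_eq_mul_pow_of_dist_mulPowFold_le s fun k T hT => by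
    simpa [hfst] using (hc _ T hT).le
  refine ⟨fun n => (s n).1, g, fun n => by simpa only [hfst] using hcS _, fun n => ?_⟩
  have hq : (s n).2 = q (List.ofFn fun i : Fin (n + 1) => (s i).1) := by
    conv_lhs => rw [hs n]
    rw [List.ofFn_succ', List.concat_eq_append, hfst, List.map_ofFn]
    rfl
  rw [hg n, hq]

end MulPowFold

theorem isOpen_ker_of_freeGroup {G α : Type*} [Group G] [MetricSpace G] [CompleteSpace G]
    [ContinuousMul G] (φ : G →* FreeGroup α) : IsOpen (φ.ker : Set G) := by
  classical
  by_contra hopen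
  have hS : (1 : G) ∈ closure (φ.ker : Set G)ᶜ := by
    rw [closure_compl, Set.mem_compl_iff, mem_interior_iff_mem_nhds]
    exact fun hker => hopen (Subgroup.isOpen_of_mem_nhds _ hker)
  obtain ⟨h, g, hhS, hg⟩ := exists_seq_eq_mul_pow_of_one_mem_closure hS
    fun l => (l.map fun x => (φ x).norm).sum + l.length
  have hsum n : ((List.ofFn fun i : Fin (n + 1) => h i).map fun x => (φ x).norm).sum =
      ∑ i ∈ Finset.range (n + 1), (φ (h i)).norm := by
    rw [List.map_ofFn, List.sum_ofFn]
    exact Fin.sum_univ_eq_sum_range (fun i => (φ (h i)).norm) _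
  simp only [hsum, List.length_ofFn] at hg
  obtain ⟨n, hn⟩ := FreeGroup.exists_eq_one_of_eq_mul_pow (g := φ ∘ g) (h := φ ∘ h)
    (p := fun n => ∑ i ∈ Finset.range (n + 1), (φ (h i)).norm + (n + 1)) (fun n => by simp)
    (fun n => by simp [hg n])
  exact hhS n hn

/-- A complete metric group whose topology is not discrete is not a free group. -/
theorem complete_metric_group_nondiscrete_not_free
    (G : Type*) [Group G] [MetricSpace G] [CompleteSpace G] [IsTopologicalGroup G]
    (hnd : ¬ DiscreteTopology G) :
    ¬ IsFreeGroup G := by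
  intro hfree
  have hker := isOpen_ker_of_freeGroup (IsFreeGroup.toFreeGroup G).toMonoidHom
  rw [(MonoidHom.ker_eq_bot_iff _).2 (IsFreeGroup.toFreeGroup G).injective, Subgroup.coe_bot] at hker
  exact hnd (discreteTopology_iff_isOpen_singleton_one.2 hker)
end

section
/- Let M be a countably infinite first-order structure (in an arbitrary language). If the automorphism group Aut(M) of M is a free group, then Aut(M) is countable; in particular, the automorphism group of a countable structure is never an uncountable free group. -/
open FirstOrder

/-- The automorphism group of a first-order structure, with composition as multiplication. -/
instance Language.autGroup (L : Language) (M : Type*) [L.Structure M] :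
    Group (M ≃[L] M) where
  mul f g := f.comp g
  one := Language.Equiv.refl L M
  inv := Language.Equiv.symm
  mul_assoc a b c := (Language.Equiv.comp_assoc c b a).symm
  one_mul := Language.Equiv.refl_comp
  mul_one := Language.Equiv.comp_refl
  inv_mul_cancel f := by
    ext x
    exact f.symm_apply_apply x

/-!
An uncountable free basis of `Aut M` leaves some basis letter `x` out of every word of a countable
family of automorphisms that is dense for pointwise convergence. The exponent sum of `x` is then
a homomorphism `φ : Aut M → ℤ` such that the pointwise stabilizer of every finite set contains an
element `u` with `φ u = -1`. Dudley's argument refutes this: choosing such `u m` to fix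
ever larger finite sets makes the nested products `y m = u m * y (m + 1) ^ 3` converge pointwise,
and then `t m = φ (y m)` satisfies `t m = 3 t (m + 1) - 1`, so every power of `3` divides the odd
number `2 t 0 - 1`.
-/

section ConjBounded

variable {G : Type*} [Group G] (D : ℕ → Subgroup G)

/- Think of `D r` as the pointwise stabilizer of the radius-`r` ball around a finite set of points.
Then `IsConjBounded D n x` says that `x` and `x⁻¹` move points by at most `n` steps, and
`AreClose D r x y` that `x, y` and `x⁻¹, y⁻¹` agree on the radius-`r` ball. -/
def IsConjBounded (n : ℕ) (x : G) : Prop :=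
  ∀ r, ∀ z ∈ D (r + n), x * z * x⁻¹ ∈ D r ∧ x⁻¹ * z * x ∈ D r

def AreClose (r : ℕ) (x y : G) : Prop :=
  x⁻¹ * y ∈ D r ∧ y * x⁻¹ ∈ D r

variable {D}

theorem IsConjBounded.mono (hD : Antitone D) {n n' : ℕ} {x : G} (h : IsConjBounded D n x)
    (hn : n ≤ n') : IsConjBounded D n' x := fun r z hz ↦
  h r z (hD (Nat.add_le_add_left hn r) hz)

theorem IsConjBounded.mul {n n' : ℕ} {x y : G} (hx : IsConjBounded D n x)
    (hy : IsConjBounded D n' y) : IsConjBounded D (n + n') (x * y) := by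
  intro r z hz
  obtain ⟨hy₁, hy₂⟩ := hy (r + n) z (by rwa [add_assoc])
  obtain ⟨hx₁, hx₂⟩ := hx (r + n') z (by rwa [add_assoc, add_comm n'])
  refine ⟨?_, ?_⟩
  · simpa only [mul_inv_rev, mul_assoc] using (hx r _ hy₁).1
  · simpa only [mul_inv_rev, mul_assoc] using (hy r _ hx₂).2

theorem IsConjBounded.pow {n : ℕ} {x : G} (hx : IsConjBounded D n x) :
    ∀ k : ℕ, IsConjBounded D (k * n) (x ^ k)
  | 0 => fun r z hz ↦ by simpa using hz
  | k + 1 => by simpa only [pow_succ, add_mul, one_mul] using (hx.pow k).mul hx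

theorem AreClose.refl (r : ℕ) (x : G) : AreClose D r x x := by
  simp [AreClose, one_mem]

theorem AreClose.mono (hD : Antitone D) {r r' : ℕ} {x y : G} (h : AreClose D r' x y)
    (hr : r ≤ r') : AreClose D r x y :=
  ⟨hD hr h.1, hD hr h.2⟩

theorem AreClose.mul (hD : Antitone D) {r m n : ℕ} {x x' y y' : G}
    (hxx : AreClose D (r + n) x x') (hyy : AreClose D (r + m) y y')
    (hx : IsConjBounded D m x) (hy : IsConjBounded D n y) :
    AreClose D r (x * y) (x' * y') := by
  have h₁ : (x * y)⁻¹ * (x' * y') = y⁻¹ * (x⁻¹ * x') * y * (y⁻¹ * y') := by group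
  have h₂ : x' * y' * (x * y)⁻¹ = x' * x⁻¹ * (x * (y' * y⁻¹) * x⁻¹) := by group
  refine ⟨?_, ?_⟩
  · rw [h₁]
    exact mul_mem (hy r _ hxx.1).2 ((hyy.mono hD (Nat.le_add_right r m)).1)
  · rw [h₂]
    exact mul_mem ((hxx.mono hD (Nat.le_add_right r n)).2) (hx r _ hyy.2).1

theorem AreClose.pow (hD : Antitone D) {n : ℕ} {y y' : G} (hy : IsConjBounded D n y) :
    ∀ (k r : ℕ), AreClose D (r + k * n) y y' → AreClose D r (y ^ k) (y' ^ k)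
  | 0, r, _ => by simpa using AreClose.refl r (1 : G)
  | k + 1, r, h => by
    rw [pow_succ, pow_succ]
    refine AreClose.mul hD (AreClose.pow hD hy k (r + n) ?_) (h.mono hD ?_) (hy.pow k) hy
    · exact h.mono hD (by linarith)
    · nlinarith

def nestedWord (u : ℕ → G) : ℕ → ℕ → G
  | 0, _ => 1
  | f + 1, m => u m * nestedWord u f (m + 1) ^ 3

theorem isConjBounded_nestedWord (hD : Antitone D) {u : ℕ → G} :
    ∀ {f m : ℕ}, (∀ j < m + f, IsConjBounded D 1 (u j)) →
      IsConjBounded D (4 ^ f) (nestedWord u f m)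
  | 0, _, _ => fun r z hz ↦ by simpa [nestedWord] using hD (Nat.le_add_right r 1) hz
  | f + 1, m, hu => by
    have hw := isConjBounded_nestedWord hD (f := f) (m := m + 1)
      fun j hj ↦ hu j (by omega)
    refine ((hu m (by omega)).mul (hw.pow 3)).mono hD ?_
    have := Nat.one_le_pow f 4 (by norm_num)
    rw [pow_succ]; omega

theorem areClose_nestedWord (hD : Antitone D) {u : ℕ → G} :
    ∀ {f m r : ℕ}, (∀ j < m + f, IsConjBounded D 1 (u j)) → u (m + f) ∈ D (r + 4 ^ (f + 1)) →
      AreClose D r (nestedWord u f m) (nestedWord u (f + 1) m)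
  | 0, m, r, _, hum => by
    have : u m ∈ D r := hD (Nat.le_add_right r _) hum
    simpa [AreClose, nestedWord] using this
  | f + 1, m, r, hu, hum => by
    have hw := isConjBounded_nestedWord hD (f := f) (m := m + 1)
      fun j hj ↦ hu j (by omega)
    have hclose := areClose_nestedWord hD (f := f) (m := m + 1) (r := r + 1 + 3 * 4 ^ f)
      (fun j hj ↦ hu j (by omega))
      (hD (show r + 1 + 3 * 4 ^ f + 4 ^ (f + 1) ≤ r + 4 ^ (f + 1 + 1) by
        have := Nat.one_le_pow f 4 (by norm_num); rw [pow_succ, pow_succ]; omega)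
        (by rwa [show m + 1 + f = m + (f + 1) by omega]))
    exact AreClose.mul hD (AreClose.refl _ _) (AreClose.pow hD hw 3 _ hclose)
      (hu m (by omega)) (hw.pow 3)

end ConjBounded

noncomputable def seqOfPrefix {α : Type*} (next : (n : ℕ) → (Fin n → α) → α) (n : ℕ) : α :=
  next n fun j ↦ seqOfPrefix next j
termination_by n
decreasing_by exact j.isLt

theorem exists_seq_forall_prefix {α : Type*} {P : (n : ℕ) → (Fin n → α) → α → Prop}
    (h : ∀ n v, ∃ x, P n v x) : ∃ u : ℕ → α, ∀ n, P n (fun j ↦ u j) (u n) := by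
  choose next hnext using h
  exact ⟨seqOfPrefix next, fun n ↦ by rw [seqOfPrefix]; exact hnext n _⟩

theorem not_forall_eq_three_mul_succ_sub_one (t : ℕ → ℤ) :
    ¬ ∀ m, t m = 3 * t (m + 1) - 1 := by
  intro h
  have key : ∀ m, 2 * t 0 - 1 = 3 ^ m * (2 * t m - 1) := by
    intro m
    induction m with
    | zero => ring
    | succ m ih => rw [ih, h m]; ring
  obtain ⟨n, hn⟩ := (Int.finiteMultiplicity_iff (a := 3) (b := 2 * t 0 - 1)).2
    ⟨by decide, by omega⟩
  exact hn ⟨_, key (n + 1)⟩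

theorem FreeGroupBasis.exists_monoidHom_eq_one_of_countable {ι G : Type*} [Group G]
    (b : FreeGroupBasis ι G) (hι : ¬ Countable ι) {C : Set G} (hC : C.Countable) :
    ∃ φ : G →* Multiplicative ℤ, (∃ ξ, φ ξ = Multiplicative.ofAdd 1) ∧ ∀ g ∈ C, φ g = 1 := by
  let ψ : G →* Multiplicative (ι →₀ ℤ) := b.lift fun i ↦ Multiplicative.ofAdd (Finsupp.single i 1)
  have hcount : (⋃ g ∈ C, ((ψ g).toAdd.support : Set ι)).Countable :=
    hC.biUnion fun g _ ↦ (Finset.finite_toSet _).countable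
  obtain ⟨i, hi⟩ : ∃ i, i ∉ ⋃ g ∈ C, ((ψ g).toAdd.support : Set ι) := by
    by_contra! h
    exact hι (Set.countable_univ_iff.1 (hcount.mono fun i _ ↦ h i))
  refine ⟨(AddMonoidHom.toMultiplicative (Finsupp.applyAddHom i)).comp ψ, ⟨b i, ?_⟩,
    fun g hg ↦ ?_⟩
  · simp [ψ]
  · have : (ψ g).toAdd i = 0 := Finsupp.notMem_support_iff.1 fun h ↦ hi (Set.mem_biUnion hg h)
    simp [this]

namespace FirstOrder.Language.Equiv

open Filter

variable {L : Language} {M : Type*} [L.Structure M]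

instance applyMulAction : MulAction (M ≃[L] M) M where
  smul g a := g a
  one_smul _ := rfl
  mul_smul _ _ _ := rfl

@[simp]
theorem aut_mul_apply (g h : M ≃[L] M) (a : M) : (g * h) a = g (h a) := rfl

@[simp]
theorem aut_inv_apply (g : M ≃[L] M) (a : M) : g⁻¹ a = g.symm a := rfl

@[simp]
theorem aut_smul_def (g : M ≃[L] M) (a : M) : g • a = g a := rfl

theorem apply_eq_of_areClose_fixingSubgroup {S : ℕ → Set M} {r : ℕ} {x y : M ≃[L] M}
    (h : AreClose (fun r ↦ fixingSubgroup (M ≃[L] M) (S r)) r x y) {a : M} (ha : a ∈ S r) :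
    y a = x a ∧ y.symm a = x.symm a := by
  have h₁ := (mem_fixingSubgroup_iff _).1 h.1 a ha
  have h₂ := (mem_fixingSubgroup_iff _).1 h.2 a ha
  simp only [aut_smul_def, aut_mul_apply, aut_inv_apply] at h₁ h₂
  refine ⟨?_, ?_⟩
  · simpa using congrArg x h₁
  · simpa using (congrArg y.symm h₂).symm

def reachSet (Λ : Set (M ≃[L] M)) (S : Set M) : ℕ → Set M
  | 0 => S
  | r + 1 => reachSet Λ S r ∪ ⋃ g ∈ Λ, (g '' reachSet Λ S r ∪ g.symm '' reachSet Λ S r)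

variable {Λ : Set (M ≃[L] M)} {S : Set M}

theorem reachSet_mono : Monotone (reachSet Λ S) :=
  monotone_nat_of_le_succ fun _ ↦ Set.subset_union_left

theorem reachSet_finite (hΛ : Λ.Finite) (hS : S.Finite) (r : ℕ) : (reachSet Λ S r).Finite := by
  induction r with
  | zero => exact hS
  | succ r ih => exact ih.union (hΛ.biUnion fun g _ ↦ (ih.image g).union (ih.image g.symm))

theorem apply_mem_reachSet_succ {g : M ≃[L] M} (hg : g ∈ Λ) {r : ℕ} {a : M}
    (ha : a ∈ reachSet Λ S r) :
    g a ∈ reachSet Λ S (r + 1) ∧ g.symm a ∈ reachSet Λ S (r + 1) :=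
  ⟨Or.inr (Set.mem_biUnion hg (Or.inl (Set.mem_image_of_mem g ha))),
    Or.inr (Set.mem_biUnion hg (Or.inr (Set.mem_image_of_mem g.symm ha)))⟩

theorem antitone_fixingSubgroup_reachSet :
    Antitone fun r ↦ fixingSubgroup (M ≃[L] M) (reachSet Λ S r) :=
  (fixingSubgroup_antitone _ _).comp_monotone reachSet_mono

theorem isConjBounded_fixingSubgroup_reachSet {g : M ≃[L] M} (hg : g ∈ Λ) :
    IsConjBounded (fun r ↦ fixingSubgroup (M ≃[L] M) (reachSet Λ S r)) 1 g := by
  intro r z hz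
  simp only [mem_fixingSubgroup_iff, aut_smul_def, aut_mul_apply, aut_inv_apply] at hz ⊢
  refine ⟨fun a ha ↦ ?_, fun a ha ↦ ?_⟩
  · rw [hz _ (apply_mem_reachSet_succ hg ha).2, apply_symm_apply]
  · rw [hz _ (apply_mem_reachSet_succ hg ha).1, symm_apply_apply]


theorem exists_eventually_eq_apply {g : ℕ → M ≃[L] M}
    (h : ∀ a, EventuallyConst (fun f ↦ g f a) atTop ∧
      EventuallyConst (fun f ↦ (g f).symm a) atTop) :
    ∃ y : M ≃[L] M, ∀ a, ∀ᶠ f in atTop, g f a = y a := by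
  have : ∀ a, ∃ b, ∀ᶠ f in atTop, g f a = b := fun a ↦
    have : Nonempty M := ⟨a⟩; (h a).1.eventuallyEq_const
  choose b hb using this
  have : ∀ a, ∃ c, ∀ᶠ f in atTop, (g f).symm a = c := fun a ↦
    have : Nonempty M := ⟨a⟩; (h a).2.eventuallyEq_const
  choose c hc using this
  refine ⟨⟨⟨b, c, fun a ↦ ?_, fun a ↦ ?_⟩, fun F x ↦ ?_, fun R x ↦ ?_⟩, hb⟩
  · obtain ⟨f, hf₁, hf₂⟩ := ((hb a).and (hc (b a))).exists
    rw [← hf₂, ← hf₁, symm_apply_apply]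
  · obtain ⟨f, hf₁, hf₂⟩ := ((hc a).and (hb (c a))).exists
    rw [← hf₂, ← hf₁, apply_symm_apply]
  · obtain ⟨f, hf₁, hf₂⟩ := ((hb (Structure.funMap F x)).and
      (eventually_all.2 fun i ↦ hb (x i))).exists
    change b _ = Structure.funMap F (b ∘ x)
    rw [← hf₁, map_fun]
    exact congrArg _ (funext hf₂)
  · obtain ⟨f, hf⟩ := (eventually_all.2 fun i ↦ hb (x i)).exists
    change Structure.RelMap R (b ∘ x) ↔ _
    rw [← map_rel (g f) R x]
    exact iff_of_eq (congrArg _ (funext fun i ↦ (hf i).symm))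

section Eventually

variable {ι : Type*} {l : Filter ι} {g h : ι → M ≃[L] M} {y z : M ≃[L] M}

theorem eventually_mul_apply (hg : ∀ a, ∀ᶠ i in l, g i a = y a)
    (hh : ∀ a, ∀ᶠ i in l, h i a = z a) (a : M) : ∀ᶠ i in l, (g i * h i) a = (y * z) a := by
  filter_upwards [hh a, hg (z a)] with i hi₁ hi₂
  rw [aut_mul_apply, hi₁, hi₂, aut_mul_apply]

theorem eventually_pow_apply (hg : ∀ a, ∀ᶠ i in l, g i a = y a) :
    ∀ (k : ℕ) (a : M), ∀ᶠ i in l, (g i ^ k) a = (y ^ k) a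
  | 0, _ => Eventually.of_forall fun _ ↦ rfl
  | k + 1, a => by
    simp only [pow_succ]
    exact eventually_mul_apply (eventually_pow_apply hg k) hg a

end Eventually

/- The radius `4 ^ (n + 1)` dominates the length of every `nestedWord` in which `u n` occurs, so
inserting `u n` changes no earlier approximation on `{a | enc a < n}`. -/
theorem exists_seq_eq_mul_pow_three (u : ℕ → M ≃[L] M) (enc : M → ℕ)
    (hu : ∀ n, u n ∈ fixingSubgroup (M ≃[L] M)
      (reachSet (Set.range fun j : Fin n ↦ u j) {a | enc a < n} (4 ^ (n + 1)))) :
    ∃ y : ℕ → M ≃[L] M, ∀ m, y m = u m * y (m + 1) ^ 3 := by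
  have hclose : ∀ f m, AreClose (fun r ↦ fixingSubgroup (M ≃[L] M)
      (reachSet (Set.range fun j : Fin (m + f) ↦ u j) {a | enc a < m + f} r)) 0
      (nestedWord u f m) (nestedWord u (f + 1) m) := fun f m ↦
    areClose_nestedWord antitone_fixingSubgroup_reachSet
      (fun j hj ↦ isConjBounded_fixingSubgroup_reachSet ⟨⟨j, hj⟩, rfl⟩)
      (antitone_fixingSubgroup_reachSet
        (by rw [zero_add]; exact Nat.pow_le_pow_right (by norm_num) (by omega)) (hu (m + f)))
  have hconst : ∀ m a, EventuallyConst (fun f ↦ nestedWord u f m a) atTop ∧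
      EventuallyConst (fun f ↦ (nestedWord u f m).symm a) atTop := by
    intro m a
    have heq := fun f (hf : enc a < m + f) ↦ apply_eq_of_areClose_fixingSubgroup (hclose f m) hf
    simp only [eventuallyConst_atTop_nat]
    exact ⟨⟨enc a + 1, fun f hf ↦ (heq f (by omega)).1⟩,
      ⟨enc a + 1, fun f hf ↦ (heq f (by omega)).2⟩⟩
  choose y hy using fun m ↦ exists_eventually_eq_apply (hconst m)
  refine ⟨y, fun m ↦ ext fun a ↦ ?_⟩
  have hshift : ∀ᶠ f in atTop, nestedWord u (f + 1) m a = y m a :=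
    (tendsto_add_atTop_nat 1).eventually (hy m a)
  have hprod : ∀ᶠ f in atTop, (u m * nestedWord u f (m + 1) ^ 3) a = (u m * y (m + 1) ^ 3) a :=
    eventually_mul_apply (fun _ ↦ Eventually.of_forall fun _ ↦ rfl)
      (eventually_pow_apply (hy (m + 1)) 3) a
  obtain ⟨f, hf₁, hf₂⟩ := (hshift.and hprod).exists
  exact hf₁.symm.trans hf₂

theorem exists_finite_forall_mem_fixingSubgroup_ne [Countable M]
    (φ : (M ≃[L] M) →* Multiplicative ℤ) :
    ∃ s : Set M, s.Finite ∧
      ∀ u ∈ fixingSubgroup (M ≃[L] M) s, φ u ≠ Multiplicative.ofAdd (-1) := by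
  by_contra! h
  obtain ⟨enc, henc⟩ := Countable.exists_injective_nat M
  obtain ⟨u, hu⟩ := exists_seq_forall_prefix (P := fun n v x ↦
      x ∈ fixingSubgroup (M ≃[L] M) (reachSet (Set.range v) {a | enc a < n} (4 ^ (n + 1))) ∧
        φ x = Multiplicative.ofAdd (-1))
    fun n v ↦ h _ (reachSet_finite (Set.finite_range v)
      ((Set.finite_lt_nat n).preimage henc.injOn) _)
  obtain ⟨y, hy⟩ := exists_seq_eq_mul_pow_three u enc fun n ↦ (hu n).1
  refine not_forall_eq_three_mul_succ_sub_one (fun m ↦ (φ (y m)).toAdd) fun m ↦ ?_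
  rw [hy m, map_mul, map_pow, toAdd_mul, toAdd_pow, (hu m).2, toAdd_ofAdd]
  ring

theorem exists_countable_forall_exists_eqOn [Countable M] :
    ∃ C : Set (M ≃[L] M), C.Countable ∧
      ∀ (g : M ≃[L] M) (s : Set M), s.Finite → ∃ d ∈ C, Set.EqOn d g s := by
  have : ∀ t : Set (M × M), ∃ d : M ≃[L] M,
      (∃ g : M ≃[L] M, ∀ p ∈ t, g p.1 = p.2) → ∀ p ∈ t, d p.1 = p.2 := fun t ↦ by
    by_cases ht : ∃ g : M ≃[L] M, ∀ p ∈ t, g p.1 = p.2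
    · exact ⟨ht.choose, fun _ ↦ ht.choose_spec⟩
    · exact ⟨1, fun h ↦ absurd h ht⟩
  choose d hd using this
  refine ⟨d '' {t | t.Finite}, Set.Countable.ofPred_finite.image d, fun g s hs ↦ ?_⟩
  refine ⟨d ((fun a ↦ (a, g a)) '' s), Set.mem_image_of_mem d (hs.image _),
    fun a ha ↦ hd _ ⟨g, ?_⟩ (a, g a) (Set.mem_image_of_mem _ ha)⟩
  rintro _ ⟨b, -, rfl⟩
  rfl

end FirstOrder.Language.Equiv

theorem aut_of_countable_structure_free_implies_countable_general
    (L : Language) (M : Type*) [L.Structure M] [Countable M]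
    (hfree : IsFreeGroup (M ≃[L] M)) : Countable (M ≃[L] M) := by
  obtain ⟨ι, ⟨b⟩⟩ := hfree.nonempty_basis
  by_contra hG
  have hι : ¬ Countable ι := fun _ ↦ hG (b.repr.toEquiv.countable_iff.2 inferInstance)
  obtain ⟨C, hC, hdense⟩ := Language.Equiv.exists_countable_forall_exists_eqOn (L := L) (M := M)
  obtain ⟨φ, ⟨ξ, hξ⟩, hφC⟩ := b.exists_monoidHom_eq_one_of_countable hι hC
  obtain ⟨s, hs, hφ⟩ := Language.Equiv.exists_finite_forall_mem_fixingSubgroup_ne φ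
  obtain ⟨d, hdC, hd⟩ := hdense ξ s hs
  refine hφ (ξ⁻¹ * d) ((mem_fixingSubgroup_iff _).2 fun a ha ↦ ?_) ?_
  · simp [hd ha]
  · rw [map_mul, map_inv, hξ, hφC d hdC, mul_one, ← ofAdd_neg]

/-- The automorphism group of a countable (countably infinite) first-order structure
is never an uncountable free group: if it is free, then it is countable. -/
theorem aut_of_countable_structure_free_implies_countable
    (L : Language) (M : Type*) [L.Structure M] [Countable M] [Infinite M]
    (hfree : IsFreeGroup (M ≃[L] M)) : Countable (M ≃[L] M) :=
  aut_of_countable_structure_free_implies_countable_general L M hfree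
end

section
/- Let 𝔸 be an infinite first-order structure and Ā = ⟨A_n : n < ω⟩ an ω-representation of 𝔸. For f,g ∈ Aut(𝔸) define d(f,g) = sup{2^{-n} : there is a ∈ A_n such that for some (f',g') ∈ {(f,g),(f⁻¹,g⁻¹)} either (i) for some m < ω exactly one of f'(a) ∈ A_m, g'(a) ∈ A_m holds, or (ii) f'(a) ≠ g'(a) and both f'(a), g'(a) lie in A_n} (with sup ∅ = 0). Then d is a metric on Aut(𝔸), indeed an ultrametric (d(f,h) ≤ max(d(f,g), d(g,h))); the metric space (Aut(𝔸), d) is complete; and its density is at most 2^{ℵ₀} + Σ_{n<ω} 2^{|A_n|}. -/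
/-!
`repDist A f g < 2⁻¹ ^ n` holds iff no level `m ≤ n` separates `f` and `g`, and a separation of
`f` and `h` at a level is a separation of `f` and `g` or of `g` and `h`, which gives the ultrametric
inequality. Along a Cauchy sequence `uₖ` the sets `A m` containing `uₖ a` stabilise first, and then
`uₖ a` itself, once a level containing `a` and that eventual value is reached; the same holds for
`uₖ⁻¹`, and the pointwise limits form an automorphism, which is the limit. Two
automorphisms with the same code at level `n` are at distance `< 2⁻¹ ^ n`, where the code of `f`
records, for `a ∈ A n`, the sets of levels of `f a` and `f⁻¹ a`, and these points themselves when
they lie in `A n`. One automorphism per code and level is a dense set, and there are at most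
`2 ^ ℵ₀ + 2 ^ #(A n)` codes at level `n`.
-/

open FirstOrder Cardinal

universe u v w

/-- The distance `d(f,g)` on `Aut(𝔸)` associated to an `ω`-representation
`A = ⟨A_n : n < ω⟩` of `𝔸`: the supremum (with `sup ∅ = 0`) of the values `2^{-n}` such
that there is `a ∈ A_n` such that for some `(f',g') ∈ {(f,g), (f⁻¹,g⁻¹)}` either
for some `m` exactly one of `f'(a) ∈ A_m`, `g'(a) ∈ A_m` holds, or
`f'(a) ≠ g'(a)` and both lie in `A_n`. -/
noncomputable def repDist {L : Language} {M : Type u} [L.Structure M]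
    (A : ℕ → Set M) (f g : M ≃[L] M) : ℝ :=
  sSup (insert 0 {r : ℝ | ∃ n : ℕ, r = (2 : ℝ)⁻¹ ^ n ∧
    ∃ a ∈ A n, ∃ p : (M ≃[L] M) × (M ≃[L] M), (p = (f, g) ∨ p = (f.symm, g.symm)) ∧
      ((∃ m : ℕ, Xor' (p.1 a ∈ A m) (p.2 a ∈ A m)) ∨
        (p.1 a ≠ p.2 a ∧ p.1 a ∈ A n ∧ p.2 a ∈ A n))})

open Filter Set

section Separation

variable {M : Type u} (A : ℕ → Set M)

/-- Condition (i) or (ii) in the definition of `repDist`, for the points `x = f' a`, `y = g' a`. -/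
def SeparatedAt (n : ℕ) (x y : M) : Prop :=
  (∃ m, ¬(x ∈ A m ↔ y ∈ A m)) ∨ (x ≠ y ∧ x ∈ A n ∧ y ∈ A n)

variable {A} {n : ℕ} {x y z : M}

theorem not_separatedAt_iff :
    ¬ SeparatedAt A n x y ↔ (∀ m, x ∈ A m ↔ y ∈ A m) ∧ (x ∈ A n → x = y) := by
  simp only [SeparatedAt, not_or, not_exists, not_not, not_and, ne_eq]
  exact and_congr_right fun hlev =>
    ⟨fun h hx => by_contra fun hne => h hne hx ((hlev n).1 hx), fun h hne hx _ => hne (h hx)⟩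

theorem not_separatedAt_self (n : ℕ) (x : M) : ¬ SeparatedAt A n x x :=
  not_separatedAt_iff.2 ⟨fun _ => Iff.rfl, fun _ => rfl⟩

theorem SeparatedAt.symm (h : SeparatedAt A n x y) : SeparatedAt A n y x := by
  contrapose! h
  obtain ⟨hlev, heq⟩ := not_separatedAt_iff.1 h
  exact not_separatedAt_iff.2 ⟨fun m => (hlev m).symm, fun hx => (heq ((hlev n).2 hx)).symm⟩

theorem SeparatedAt.left_or_right (h : SeparatedAt A n x z) (y : M) :
    SeparatedAt A n x y ∨ SeparatedAt A n y z := by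
  contrapose! h
  obtain ⟨hxy, exy⟩ := not_separatedAt_iff.1 h.1
  obtain ⟨hyz, eyz⟩ := not_separatedAt_iff.1 h.2
  exact not_separatedAt_iff.2
    ⟨fun m => (hxy m).trans (hyz m), fun hx => (exy hx).trans (eyz ((hxy n).1 hx))⟩

end Separation

section RepDist

variable {L : Language} {M : Type u} [L.Structure M] (A : ℕ → Set M)

def AutSeparatedAt (n : ℕ) (f g : M ≃[L] M) : Prop :=
  ∃ a ∈ A n, SeparatedAt A n (f a) (g a) ∨ SeparatedAt A n (f.symm a) (g.symm a)

variable {A} {n : ℕ} {f g h : M ≃[L] M}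

theorem not_autSeparatedAt_self (n : ℕ) (f : M ≃[L] M) : ¬ AutSeparatedAt A n f f := by
  rintro ⟨a, -, h | h⟩ <;> exact not_separatedAt_self _ _ h

theorem AutSeparatedAt.symm (hfg : AutSeparatedAt A n f g) : AutSeparatedAt A n g f := by
  obtain ⟨a, ha, h⟩ := hfg
  exact ⟨a, ha, h.imp SeparatedAt.symm SeparatedAt.symm⟩

theorem AutSeparatedAt.left_or_right (hfh : AutSeparatedAt A n f h) (g : M ≃[L] M) :
    AutSeparatedAt A n f g ∨ AutSeparatedAt A n g h := by
  obtain ⟨a, ha, hsep | hsep⟩ := hfh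
  · exact (hsep.left_or_right (g a)).imp (fun h => ⟨a, ha, .inl h⟩) (fun h => ⟨a, ha, .inl h⟩)
  · exact (hsep.left_or_right (g.symm a)).imp (fun h => ⟨a, ha, .inr h⟩)
      (fun h => ⟨a, ha, .inr h⟩)

theorem repDist_eq_sSup (f g : M ≃[L] M) :
    repDist A f g = sSup (insert 0 {r | ∃ n, r = (2 : ℝ)⁻¹ ^ n ∧ AutSeparatedAt A n f g}) := by
  simp only [repDist, AutSeparatedAt, SeparatedAt, Xor', xor_iff_not_iff, or_and_right, exists_or,
    exists_eq_left]

theorem repDist_bddAbove (f g : M ≃[L] M) :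
    BddAbove (insert (0 : ℝ) {r | ∃ n, r = (2 : ℝ)⁻¹ ^ n ∧ AutSeparatedAt A n f g}) := by
  refine ⟨1, ?_⟩
  rintro r (rfl | ⟨n, rfl, -⟩)
  · exact zero_le_one
  · exact pow_le_one₀ (by norm_num) (by norm_num)

theorem repDist_nonneg (f g : M ≃[L] M) : 0 ≤ repDist A f g := by
  rw [repDist_eq_sSup]
  exact le_csSup (repDist_bddAbove f g) (mem_insert _ _)

theorem AutSeparatedAt.half_pow_le_repDist (hfg : AutSeparatedAt A n f g) :
    (2 : ℝ)⁻¹ ^ n ≤ repDist A f g := by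
  rw [repDist_eq_sSup]
  exact le_csSup (repDist_bddAbove f g) (mem_insert_of_mem _ ⟨n, rfl, hfg⟩)

theorem repDist_le {c : ℝ} (hc : 0 ≤ c) (h : ∀ n, AutSeparatedAt A n f g → (2 : ℝ)⁻¹ ^ n ≤ c) :
    repDist A f g ≤ c := by
  rw [repDist_eq_sSup]
  refine csSup_le (insert_nonempty _ _) ?_
  rintro r (rfl | ⟨n, rfl, hn⟩)
  · exact hc
  · exact h n hn

theorem repDist_self (f : M ≃[L] M) : repDist A f f = 0 :=
  (repDist_le le_rfl fun n h => (not_autSeparatedAt_self n f h).elim).antisymm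
    (repDist_nonneg f f)

theorem repDist_comm (f g : M ≃[L] M) : repDist A f g = repDist A g f :=
  (repDist_le (repDist_nonneg g f) fun _ h => h.symm.half_pow_le_repDist).antisymm
    (repDist_le (repDist_nonneg f g) fun _ h => h.symm.half_pow_le_repDist)

theorem repDist_le_max (f g h : M ≃[L] M) :
    repDist A f h ≤ max (repDist A f g) (repDist A g h) := by
  refine repDist_le ((repDist_nonneg f g).trans (le_max_left _ _)) fun n hfh => ?_
  rcases hfh.left_or_right g with hfg | hgh
  · exact hfg.half_pow_le_repDist.trans (le_max_left _ _)
  · exact hgh.half_pow_le_repDist.trans (le_max_right _ _)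

theorem repDist_lt_half_pow_iff :
    repDist A f g < (2 : ℝ)⁻¹ ^ n ↔ ∀ m ≤ n, ¬ AutSeparatedAt A m f g := by
  refine ⟨fun h m hm hfg => ?_, fun h => ?_⟩
  · exact (pow_le_pow_of_le_one (by norm_num) (by norm_num) hm).not_gt
      (hfg.half_pow_le_repDist.trans_lt h)
  · calc repDist A f g ≤ (2 : ℝ)⁻¹ ^ (n + 1) := repDist_le (by positivity) fun m hm =>
          pow_le_pow_of_le_one (by norm_num) (by norm_num) (not_le.1 fun hmn => h m hmn hm)
      _ < (2 : ℝ)⁻¹ ^ n := pow_lt_pow_right_of_lt_one₀ (by norm_num) (by norm_num) n.lt_succ_self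

end RepDist

section Limits

variable {M : Type u} {A : ℕ → Set M}

theorem eventually_mem_of_iUnion_eq_univ (hmono : Monotone A) (hunion : ⋃ n, A n = Set.univ)
    (x : M) : ∀ᶠ n in atTop, x ∈ A n := by
  obtain ⟨n, hn⟩ := iUnion_eq_univ_iff.1 hunion x
  exact eventually_atTop.2 ⟨n, fun k hk => hmono hk hn⟩

theorem exists_eventually_eq_of_cauchy (hmono : Monotone A) (hunion : ⋃ n, A n = Set.univ)
    {u : ℕ → M → M}
    (hu : ∀ n, ∃ N, ∀ k ≥ N, ∀ l ≥ N, ∀ a ∈ A n, ¬ SeparatedAt A n (u k a) (u l a)) (a : M) :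
    ∃ b, ∀ᶠ k in atTop, u k a = b := by
  obtain ⟨n₀, ha₀⟩ := (eventually_mem_of_iUnion_eq_univ hmono hunion a).exists
  obtain ⟨N₀, hN₀⟩ := hu n₀
  obtain ⟨n, ha, hb⟩ := ((eventually_mem_of_iUnion_eq_univ hmono hunion a).and
    (eventually_mem_of_iUnion_eq_univ hmono hunion (u N₀ a))).exists
  obtain ⟨N, hN⟩ := hu n
  refine ⟨u (max N₀ N) a, eventually_atTop.2 ⟨max N₀ N, fun k hk => ?_⟩⟩
  have hlev := (not_separatedAt_iff.1 (hN₀ k (le_of_max_le_left hk) N₀ le_rfl a ha₀)).1 n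
  exact (not_separatedAt_iff.1 (hN k (le_of_max_le_right hk) _ (le_max_right _ _) a ha)).2
    (hlev.2 hb)

end Limits

namespace FirstOrder.Language.Equiv

variable {L : Language} {M N : Type*} [L.Structure M] [L.Structure N]

theorem exists_eventually_eq {ι : Type*} {l : Filter ι} [l.NeBot] {u : ι → M ≃[L] N}
    (h₁ : ∀ a, ∃ b, ∀ᶠ i in l, u i a = b) (h₂ : ∀ b, ∃ a, ∀ᶠ i in l, (u i).symm b = a) :
    ∃ E : M ≃[L] N, (∀ a, ∀ᶠ i in l, u i a = E a) ∧ ∀ b, ∀ᶠ i in l, (u i).symm b = E.symm b := by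
  choose F hF using h₁
  choose G hG using h₂
  have hGF : ∀ a, G (F a) = a := fun a => by
    obtain ⟨i, hi, hi'⟩ := ((hF a).and (hG (F a))).exists
    rw [← hi', ← hi, (u i).symm_apply_apply]
  have hFG : ∀ b, F (G b) = b := fun b => by
    obtain ⟨i, hi, hi'⟩ := ((hG b).and (hF (G b))).exists
    rw [← hi', ← hi, (u i).apply_symm_apply]
  have hmap_fun : ∀ {n} (φ : L.Functions n) (x : Fin n → M),
      F (Structure.funMap φ x) = Structure.funMap φ (F ∘ x) := fun φ x => by
    obtain ⟨i, hi, hx⟩ := ((hF (Structure.funMap φ x)).and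
      (eventually_all.2 fun j => hF (x j))).exists
    rw [← hi, (u i).map_fun]
    exact congrArg _ (funext hx)
  have hmap_rel : ∀ {n} (r : L.Relations n) (x : Fin n → M),
      Structure.RelMap r (F ∘ x) ↔ Structure.RelMap r x := fun r x => by
    obtain ⟨i, hx⟩ := (eventually_all.2 fun j => hF (x j)).exists
    rw [← (u i).map_rel]
    exact Iff.of_eq (congrArg _ (funext hx)).symm
  exact ⟨⟨⟨F, G, hGF, hFG⟩, hmap_fun, hmap_rel⟩, hF, hG⟩

end FirstOrder.Language.Equiv

section Metric

variable {L : Language} {M : Type u} [L.Structure M] {A : ℕ → Set M}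

theorem eq_of_repDist_eq_zero (hmono : Monotone A) (hunion : ⋃ n, A n = Set.univ)
    {f g : M ≃[L] M} (h : repDist A f g = 0) : f = g := by
  refine Language.Equiv.ext fun a => by_contra fun hne => ?_
  obtain ⟨n, ha, hfa, hga⟩ := ((eventually_mem_of_iUnion_eq_univ hmono hunion a).and
    ((eventually_mem_of_iUnion_eq_univ hmono hunion (f a)).and
      (eventually_mem_of_iUnion_eq_univ hmono hunion (g a)))).exists
  have hsep : AutSeparatedAt A n f g := ⟨a, ha, .inl (.inr ⟨hne, hfa, hga⟩)⟩
  exact (h ▸ hsep.half_pow_le_repDist).not_gt (by positivity)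

variable (A) in
noncomputable abbrev repMetric (hmono : Monotone A) (hunion : ⋃ n, A n = Set.univ) :
    MetricSpace (M ≃[L] M) where
  dist := repDist A
  dist_self := repDist_self
  dist_comm := repDist_comm
  dist_triangle f g h := (repDist_le_max f g h).trans
    (max_le_add_of_nonneg (repDist_nonneg f g) (repDist_nonneg g h))
  eq_of_dist_eq_zero := eq_of_repDist_eq_zero hmono hunion
  edist_dist _ _ := rfl

theorem exists_repDist_tendsto_of_cauchy (hmono : Monotone A) (hunion : ⋃ n, A n = Set.univ)
    {u : ℕ → M ≃[L] M} (hu : ∀ ε > 0, ∃ N, ∀ k ≥ N, ∀ l ≥ N, repDist A (u k) (u l) < ε) :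
    ∃ E, ∀ ε > 0, ∃ N, ∀ k ≥ N, repDist A (u k) E < ε := by
  have hsep : ∀ n, ∃ N, ∀ k ≥ N, ∀ l ≥ N, ∀ m ≤ n, ¬ AutSeparatedAt A m (u k) (u l) := fun n =>
    (hu _ (by positivity)).imp fun N hN k hk l hl => repDist_lt_half_pow_iff.1 (hN k hk l hl)
  obtain ⟨E, hE, hE_symm⟩ := Language.Equiv.exists_eventually_eq (l := atTop)
    (exists_eventually_eq_of_cauchy hmono hunion fun n => (hsep n).imp
      fun N hN k hk l hl a ha h => hN k hk l hl n le_rfl ⟨a, ha, .inl h⟩)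
    (exists_eventually_eq_of_cauchy (u := fun k => (u k).symm) hmono hunion fun n => (hsep n).imp
      fun N hN k hk l hl a ha h => hN k hk l hl n le_rfl ⟨a, ha, .inr h⟩)
  refine ⟨E, fun ε hε => ?_⟩
  obtain ⟨n, hn⟩ := exists_pow_lt_of_lt_one hε (by norm_num : (2 : ℝ)⁻¹ < 1)
  obtain ⟨N, hN⟩ := hsep n
  refine ⟨N, fun k hk => lt_trans (repDist_lt_half_pow_iff.2 fun m hm ⟨a, ha, hka⟩ => ?_) hn⟩
  obtain ⟨l, hl, hla, hla'⟩ := ((eventually_ge_atTop N).and ((hE a).and (hE_symm a))).exists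
  rw [← hla, ← hla'] at hka
  exact hN k hk l hl m hm ⟨a, ha, hka⟩

end Metric

section Codes

variable {M : Type u} (A : ℕ → Set M)

def levelCode (n : ℕ) (x : M) : Set ℕ × Set (A n) :=
  ({m | x ∈ A m}, {y | (y : M) = x})

variable {L : Language} [L.Structure M]

def autCode (n : ℕ) (f : M ≃[L] M) : A n → (Set ℕ × Set (A n)) × (Set ℕ × Set (A n)) :=
  fun a => (levelCode A n (f a), levelCode A n (f.symm a))

variable {A}

theorem not_separatedAt_of_levelCode_eq (hmono : Monotone A) {m n : ℕ} (hmn : m ≤ n) {x y : M}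
    (h : levelCode A n x = levelCode A n y) : ¬ SeparatedAt A m x y := by
  obtain ⟨hlev, hpt⟩ := Prod.mk.inj h
  exact not_separatedAt_iff.2
    ⟨fun k => Set.ext_iff.1 hlev k, fun hx => (Set.ext_iff.1 hpt ⟨x, hmono hmn hx⟩).1 rfl⟩

theorem repDist_lt_of_autCode_eq (hmono : Monotone A) {n : ℕ} {f g : M ≃[L] M}
    (h : autCode A n f = autCode A n g) : repDist A f g < (2 : ℝ)⁻¹ ^ n := by
  refine repDist_lt_half_pow_iff.2 fun m hm ⟨a, ha, hsep⟩ => ?_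
  obtain ⟨hfg, hfg_symm⟩ := Prod.mk.inj (congrFun h ⟨a, hmono hm ha⟩)
  exact hsep.elim (not_separatedAt_of_levelCode_eq hmono hm hfg)
    (not_separatedAt_of_levelCode_eq hmono hm hfg_symm)

end Codes

theorem Cardinal.two_power_le_of_le_aleph0_add {κ μ : Cardinal.{u}} (h : μ ≤ ℵ₀ + κ) :
    (2 : Cardinal) ^ μ ≤ 2 ^ ℵ₀ + 2 ^ κ := by
  rw [add_eq_max le_rfl] at h
  rcases le_total ℵ₀ κ with hκ | hκ
  · rw [max_eq_right hκ] at h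
    exact (power_le_power_left two_ne_zero h).trans le_add_self
  · rw [max_eq_left hκ] at h
    exact (power_le_power_left two_ne_zero h).trans le_self_add

theorem Cardinal.mk_arrow_set_prod_le (X : Type u) :
    #(X → (Set ℕ × Set X) × (Set ℕ × Set X)) ≤ 2 ^ (ℵ₀ : Cardinal.{u}) + 2 ^ #X := by
  have hX : ℵ₀ ≤ ℵ₀ + #X := le_self_add
  simp only [mk_pi, mk_prod, mk_set, mk_eq_aleph0, lift_power, lift_ofNat, lift_aleph0, lift_uzero,
    ← power_add, lift_id, prod_const, ← power_mul]
  refine two_power_le_of_le_aleph0_add ?_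
  calc (ℵ₀ + #X + (ℵ₀ + #X)) * #X ≤ (ℵ₀ + #X) * (ℵ₀ + #X) := by
        rw [add_eq_self hX]
        exact mul_le_mul_right le_add_self _
    _ = ℵ₀ + #X := mul_eq_self hX

section Density

variable {L : Language} {M : Type u} [L.Structure M] {A : ℕ → Set M}

theorem exists_dense_repDist (hmono : Monotone A) :
    ∃ s : Set (M ≃[L] M), (∀ f, ∀ ε > 0, ∃ g ∈ s, repDist A g f < ε) ∧
      #s ≤ 2 ^ (ℵ₀ : Cardinal.{u}) + sum fun n => 2 ^ #(A n) := by
  refine ⟨⋃ n, range (rangeSplitting (autCode (L := L) A n)), fun f ε hε => ?_, ?_⟩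
  · obtain ⟨n, hn⟩ := exists_pow_lt_of_lt_one hε (by norm_num : (2 : ℝ)⁻¹ < 1)
    refine ⟨_, mem_iUnion.2 ⟨n, mem_range_self ⟨_, mem_range_self f⟩⟩, lt_trans ?_ hn⟩
    exact repDist_lt_of_autCode_eq hmono (apply_rangeSplitting _ _)
  · calc #(⋃ n, range (rangeSplitting (autCode (L := L) A n)))
        ≤ sum fun n => #(range (rangeSplitting (autCode (L := L) A n))) :=
          (lift_uzero _).symm.trans_le mk_iUnion_le_sum_mk_lift
      _ ≤ sum fun n => 2 ^ (ℵ₀ : Cardinal.{u}) + 2 ^ #(A n) := sum_le_sum _ _ fun n =>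
          mk_range_le.trans ((mk_set_le _).trans (mk_arrow_set_prod_le _))
      _ = 2 ^ (ℵ₀ : Cardinal.{u}) + sum fun n => 2 ^ #(A n) := by
          rw [sum_add_distrib', sum_const, mk_nat, lift_aleph0, lift_uzero,
            aleph0_mul_eq (cantor ℵ₀).le]

end Density

theorem aut_repDist_complete_ultrametric_general
    (L : Language) (M : Type u) [L.Structure M]
    (A : ℕ → Set M) (hmono : ∀ n, A n ⊆ A (n + 1)) (hunion : (⋃ n, A n) = Set.univ) :
    ∃ m : MetricSpace (M ≃[L] M),
      letI := m
      (∀ f g : M ≃[L] M, dist f g = repDist A f g) ∧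
      (∀ f g h : M ≃[L] M, dist f h ≤ max (dist f g) (dist g h)) ∧
      CompleteSpace (M ≃[L] M) ∧
      (∃ s : Set (M ≃[L] M), Dense s ∧
        Cardinal.mk s ≤ 2 ^ (ℵ₀ : Cardinal.{u}) + Cardinal.sum (fun n => 2 ^ Cardinal.mk (A n))) := by
  have hA : Monotone A := monotone_nat_of_le_succ hmono
  let m := repMetric (L := L) A hA hunion
  refine ⟨m, fun _ _ => rfl, repDist_le_max, ?_, ?_⟩
  · exact Metric.complete_of_cauchySeq_tendsto fun u hu =>
      (exists_repDist_tendsto_of_cauchy hA hunion (Metric.cauchySeq_iff.1 hu)).imp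
        fun _ hE => Metric.tendsto_atTop.2 hE
  · obtain ⟨s, hs, hcard⟩ := exists_dense_repDist (L := L) hA
    exact ⟨s, Metric.dense_iff.2 fun f r hr => (hs f r hr).imp fun _ hg => ⟨hg.2, hg.1⟩, hcard⟩

/-- For an infinite structure `𝔸` with an `ω`-representation `⟨A_n : n < ω⟩`, the function
`repDist` is a metric on `Aut(𝔸)`, indeed an ultrametric; the resulting metric space is
complete; and its density is at most `2^{ℵ₀} + Σ_{n<ω} 2^{|A_n|}`. -/
theorem aut_repDist_complete_ultrametric
    (L : Language) (M : Type u) [L.Structure M] [Infinite M]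
    (A : ℕ → Set M) (hmono : ∀ n, A n ⊆ A (n + 1)) (hunion : (⋃ n, A n) = Set.univ) :
    ∃ m : MetricSpace (M ≃[L] M),
      letI := m
      (∀ f g : M ≃[L] M, dist f g = repDist A f g) ∧
      (∀ f g h : M ≃[L] M, dist f h ≤ max (dist f g) (dist g h)) ∧
      CompleteSpace (M ≃[L] M) ∧
      (∃ s : Set (M ≃[L] M), Dense s ∧
        Cardinal.mk s ≤ 2 ^ (ℵ₀ : Cardinal.{u}) + Cardinal.sum (fun n => 2 ^ Cardinal.mk (A n))) :=
  aut_repDist_complete_ultrametric_general L M A hmono hunion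
end

section
/- Let (G,d) be a complete metric group with identity e, and let B ⊆ G be a countable set such that e lies in the closure of B ∖ {e}. Let Ξ be a set of group words w(x, y₁,…,y_k) (elements of free groups in the variables shown, evaluated in G by substitution). Assume: (d) for every word w(x,ȳ) ∈ Ξ, every tuple b̄ of elements of B, and every c ∈ G, the set {a ∈ G : w(a, b̄) = c} is finite; and (e) for every finite A ⊆ G and every real ζ > 0 there are a word w(x,ȳ) ∈ Ξ and a tuple b̄ of elements of B such that d(w(e, b̄), e) < ζ and w(c, b̄) ∉ A for every c ∈ G. Then no countable subgroup of G containing B is a retract of G; consequently G is not a free group. -/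
/-!
Write `f(a) = w(a, b̄)` for `w ∈ Ξ` and `b̄` from `B`. A retraction `h` onto `H ⊇ B` commutes
with every such `f`, since it fixes `b̄`. Enumerate `H = {c₀, c₁, …}` and choose such maps
`f₀, f₁, …` one at a time: `fₙ` moves `1` so little that every tail `fₘ ∘ ⋯ ∘ fₙ` moves `1` less
than `2⁻ⁿ` away from `fₘ ∘ ⋯ ∘ fₙ₋₁ (1)`, and, by (e) applied to the set
`(f₀ ∘ ⋯ ∘ fₙ₋₁)⁻¹ {cₙ}` (finite by (d)), `f₀ ∘ ⋯ ∘ fₙ` misses `cₙ`. By completeness the tails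
converge to points `tₘ`, and continuity gives `t₀ = (f₀ ∘ ⋯ ∘ fₙ) (tₙ₊₁)`. Hence
`h t₀ = (f₀ ∘ ⋯ ∘ fₙ) (h tₙ₊₁) ≠ cₙ` for every `n`, although `h t₀ ∈ H`. In a free group, a
countable set lies in the subgroup generated by the countably many generators occurring in its
elements, and that subgroup is a retract.
-/

/-- Evaluation of a group word `w(x, y₁, …, y_k)` (an element of the free group on
`Fin (k+1)`, with variable `0` distinguished as `x`) in a group `G`, at `x := a` and
`ȳ := b`. -/
def evalWord {G : Type*} [Group G] {k : ℕ} (w : FreeGroup (Fin (k + 1)))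
    (a : G) (b : Fin k → G) : G :=
  FreeGroup.lift (Fin.cons a b) w

open Filter Topology

section CompSeq

variable {X : Type*}

/-- `compSeq f m n = f m ∘ f (m + 1) ∘ ⋯ ∘ f (m + n - 1)`, the identity for `n = 0`. -/
def compSeq (f : ℕ → X → X) (m : ℕ) : ℕ → X → X
  | 0 => id
  | n + 1 => compSeq f m n ∘ f (m + n)

theorem compSeq_add (f : ℕ → X → X) (m n k : ℕ) :
    compSeq f m (n + k) = compSeq f m n ∘ compSeq f (m + n) k := by
  induction k with
  | zero => rfl
  | succ k ih =>
    show compSeq f m (n + k) ∘ f (m + (n + k)) = _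
    rw [ih, ← add_assoc]
    rfl

theorem compSeq_congr {f g : ℕ → X → X} {m n : ℕ} (h : ∀ i, m ≤ i → i < m + n → f i = g i) :
    compSeq f m n = compSeq g m n := by
  induction n with
  | zero => rfl
  | succ n ih =>
    rw [compSeq, compSeq, ih fun i hm hi => h i hm (by omega), h (m + n) (by omega) (by omega)]

theorem continuous_compSeq [TopologicalSpace X] {f : ℕ → X → X} (hf : ∀ i, Continuous (f i))
    (m n : ℕ) : Continuous (compSeq f m n) := by
  induction n with
  | zero => exact continuous_id
  | succ n ih => exact ih.comp (hf _)

theorem finite_preimage_compSeq {f : ℕ → X → X} (hf : ∀ i y, (f i ⁻¹' {y}).Finite)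
    (m n : ℕ) (y : X) : (compSeq f m n ⁻¹' {y}).Finite := by
  induction n generalizing y with
  | zero => exact Set.finite_singleton y
  | succ n ih =>
    rw [compSeq, Set.preimage_comp]
    exact (ih y).preimage' fun z _ => hf _ z

theorem commute_compSeq {h : X → X} {f : ℕ → X → X} (hf : ∀ i, Function.Commute h (f i))
    (m n : ℕ) : Function.Commute h (compSeq f m n) := by
  induction n with
  | zero => exact fun _ => rfl
  | succ n ih => exact ih.comp_right (hf _)

end CompSeq

section CompleteMetric

variable {X : Type*} [MetricSpace X] {x₀ : X} {𝓕 : Set (X → X)}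

theorem exists_mem_forall_dist_lt_forall_ne
    (hsmall : ∀ A : Set X, A.Finite → ∀ ζ : ℝ, 0 < ζ →
      ∃ f ∈ 𝓕, dist (f x₀) x₀ < ζ ∧ ∀ x, f x ∉ A)
    {φ : ℕ → X → X} (hφ : ∀ m, ContinuousAt (φ m) x₀)
    {ψ : X → X} (hψ : ∀ y, (ψ ⁻¹' {y}).Finite) (n : ℕ) {ε : ℝ} (hε : 0 < ε) (y : X) :
    ∃ f ∈ 𝓕, (∀ m ≤ n, dist (φ m (f x₀)) (φ m x₀) < ε) ∧ ∀ x, ψ (f x) ≠ y := by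
  have hnhds : ∀ᶠ x in 𝓝 x₀, ∀ m ∈ Set.Iic n, dist (φ m x) (φ m x₀) < ε :=
    (eventually_all_finite (Set.finite_Iic n)).2 fun m _ =>
      (hφ m).eventually (Metric.ball_mem_nhds _ hε)
  obtain ⟨ζ, hζ, hball⟩ := Metric.eventually_nhds_iff.1 hnhds
  obtain ⟨f, hf, hdist, havoid⟩ := hsmall _ (hψ y) ζ hζ
  exact ⟨f, hf, fun m hm => hball hdist m hm, havoid⟩

theorem exists_seq_mem_dist_compSeq_le_forall_ne (hcont : ∀ f ∈ 𝓕, Continuous f)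
    (hfin : ∀ f ∈ 𝓕, ∀ y, (f ⁻¹' {y}).Finite)
    (hsmall : ∀ A : Set X, A.Finite → ∀ ζ : ℝ, 0 < ζ →
      ∃ f ∈ 𝓕, dist (f x₀) x₀ < ζ ∧ ∀ x, f x ∉ A)
    (c : ℕ → X) :
    ∃ F : ℕ → X → X, (∀ n, F n ∈ 𝓕) ∧
      (∀ m j, dist (compSeq F m j x₀) (compSeq F m (j + 1) x₀) ≤ (1 / 2) ^ j) ∧
      ∀ n x, compSeq F 0 (n + 1) x ≠ c n := by
  have step : ∀ n (g : ℕ → X → X), (∀ i, Continuous (g i) ∧ ∀ y, (g i ⁻¹' {y}).Finite) →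
      ∃ f ∈ 𝓕, (∀ m ≤ n, dist (compSeq g m (n - m) (f x₀)) (compSeq g m (n - m) x₀)
        < (1 / 2) ^ n) ∧ ∀ x, compSeq g 0 n (f x) ≠ c n := fun n g hg =>
    exists_mem_forall_dist_lt_forall_ne hsmall
      (fun m => (continuous_compSeq (fun i => (hg i).1) m (n - m)).continuousAt)
      (finite_preimage_compSeq (fun i => (hg i).2) 0 n) n (by positivity) (c n)
  have : Nonempty (X → X) := ⟨id⟩
  choose! next hnext_mem hnext_dist hnext_ne using step
  -- `F n = next n (F 0, …, F (n - 1), id, id, …)`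
  let F : ℕ → X → X := fun n => Nat.strongRec (motive := fun _ => X → X)
    (fun n prev => next n fun i => if hi : i < n then prev i hi else id) n
  let pre : ℕ → ℕ → X → X := fun n i => if i < n then F i else id
  have hF : ∀ n, F n = next n (pre n) := fun n => by
    simp only [F, pre]
    rw [Nat.strongRec_eq]
    simp only [dite_eq_ite]
  have hpre : ∀ n, (∀ i < n, F i ∈ 𝓕) →
      ∀ i, Continuous (pre n i) ∧ ∀ y, (pre n i ⁻¹' {y}).Finite := by
    intro n hF𝓕 i
    by_cases hi : i < n
    · simp only [pre, if_pos hi]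
      exact ⟨hcont _ (hF𝓕 i hi), hfin _ (hF𝓕 i hi)⟩
    · simp only [pre, if_neg hi, Set.preimage_id]
      exact ⟨continuous_id, Set.finite_singleton⟩
  have hmem : ∀ n, F n ∈ 𝓕 := fun n => by
    induction n using Nat.strong_induction_on with
    | _ n ih => rw [hF]; exact hnext_mem n _ (hpre n ih)
  have hagree : ∀ {n m j}, m + j ≤ n → compSeq (pre n) m j = compSeq F m j := fun h =>
    compSeq_congr fun i _ hi => if_pos (by omega)
  refine ⟨F, hmem, fun m j => ?_, fun n x => ?_⟩
  · have h := hnext_dist (m + j) (pre (m + j)) (hpre _ fun i _ => hmem i) m (by omega)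
    rw [← hF, Nat.add_sub_cancel_left, hagree le_rfl] at h
    calc dist (compSeq F m j x₀) (compSeq F m (j + 1) x₀)
        ≤ (1 / 2) ^ (m + j) := by rw [dist_comm]; exact h.le
      _ ≤ (1 / 2) ^ j := pow_le_pow_of_le_one (by norm_num) (by norm_num) (by omega)
  · have h := hnext_ne n (pre n) (hpre n fun i _ => hmem i) x
    rw [← hF, hagree (Nat.zero_add n).le] at h
    simpa only [compSeq, zero_add, Function.comp_apply] using h

theorem not_countable_range_of_commute [CompleteSpace X] (hcont : ∀ f ∈ 𝓕, Continuous f)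
    (hfin : ∀ f ∈ 𝓕, ∀ y, (f ⁻¹' {y}).Finite)
    (hsmall : ∀ A : Set X, A.Finite → ∀ ζ : ℝ, 0 < ζ →
      ∃ f ∈ 𝓕, dist (f x₀) x₀ < ζ ∧ ∀ x, f x ∉ A)
    {h : X → X} (hh : ∀ f ∈ 𝓕, Function.Commute h f) : ¬ (Set.range h).Countable := by
  intro hcount
  obtain ⟨c, hc⟩ := hcount.exists_eq_range ⟨h x₀, x₀, rfl⟩
  obtain ⟨F, hF𝓕, hFdist, hFne⟩ := exists_seq_mem_dist_compSeq_le_forall_ne hcont hfin hsmall c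
  have hFcont : ∀ i, Continuous (F i) := fun i => hcont _ (hF𝓕 i)
  choose t ht using fun m => cauchySeq_tendsto_of_complete <|
    cauchySeq_of_le_geometric (1 / 2 : ℝ) 1 (by norm_num) fun j => by
      simpa only [one_mul] using hFdist m j
  have ht₀ : ∀ n, compSeq F 0 n (t n) = t 0 := fun n => by
    refine tendsto_nhds_unique (((continuous_compSeq hFcont 0 n).tendsto _).comp (ht n)) ?_
    refine ((ht 0).comp (tendsto_add_atTop_nat n)).congr fun j => ?_
    rw [Function.comp_apply, add_comm, compSeq_add, zero_add]
    rfl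
  obtain ⟨n, hn⟩ : h (t 0) ∈ Set.range c := hc ▸ Set.mem_range_self _
  rw [← ht₀ (n + 1), commute_compSeq (fun i => hh _ (hF𝓕 i))] at hn
  exact hFne n _ hn.symm

end CompleteMetric

section WordMaps

variable {G : Type*} [Group G]

theorem map_evalWord {K : Type*} [Group K] (φ : G →* K) {k : ℕ} (w : FreeGroup (Fin (k + 1)))
    (a : G) (b : Fin k → G) : φ (evalWord w a b) = evalWord w (φ a) (φ ∘ b) := by
  rw [evalWord, evalWord, ← MonoidHom.comp_apply]
  refine FreeGroup.lift_unique _ (fun i => ?_)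
  cases i using Fin.cases <;> simp

theorem continuous_evalWord [TopologicalSpace G] [IsTopologicalGroup G] {k : ℕ}
    (w : FreeGroup (Fin (k + 1))) (b : Fin k → G) : Continuous fun a : G => evalWord w a b := by
  induction w using FreeGroup.induction_on with
  | C1 => simp only [evalWord, map_one]; exact continuous_const
  | of i =>
    cases i using Fin.cases <;>
      simp only [evalWord, FreeGroup.lift_apply_of, Fin.cons_zero, Fin.cons_succ] <;> fun_prop
  | inv_of x hx => simp only [evalWord, map_inv] at hx ⊢; exact hx.inv
  | mul x y hx hy => simp only [evalWord, map_mul] at hx hy ⊢; exact hx.mul hy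

theorem not_countable_range_of_forall_mem_apply_eq [MetricSpace G] [CompleteSpace G]
    [IsTopologicalGroup G] {B : Set G} {Ξ : Set (Σ k : ℕ, FreeGroup (Fin (k + 1)))}
    (hd : ∀ w ∈ Ξ, ∀ b : Fin w.1 → G, (∀ i, b i ∈ B) → ∀ c : G,
      {a : G | evalWord w.2 a b = c}.Finite)
    (he : ∀ A : Set G, A.Finite → ∀ ζ : ℝ, 0 < ζ →
      ∃ w ∈ Ξ, ∃ b : Fin w.1 → G, (∀ i, b i ∈ B) ∧
        dist (evalWord w.2 1 b) (1 : G) < ζ ∧ ∀ c : G, evalWord w.2 c b ∉ A)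
    {h : G →* G} (hB : ∀ b ∈ B, h b = b) : ¬ (Set.range h).Countable := by
  let 𝓕 : Set (G → G) :=
    {f | ∃ w ∈ Ξ, ∃ b : Fin w.1 → G, (∀ i, b i ∈ B) ∧ f = fun a => evalWord w.2 a b}
  refine not_countable_range_of_commute (x₀ := (1 : G)) (𝓕 := 𝓕) ?_ ?_ ?_ ?_
  · rintro _ ⟨w, -, b, -, rfl⟩
    exact continuous_evalWord w.2 b
  · rintro _ ⟨w, hw, b, hb, rfl⟩ c
    exact hd w hw b hb c
  · intro A hA ζ hζ
    obtain ⟨w, hw, b, hb, hdist, havoid⟩ := he A hA ζ hζ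
    exact ⟨_, ⟨w, hw, b, hb, rfl⟩, hdist, havoid⟩
  · rintro _ ⟨w, -, b, hb, rfl⟩ a
    have hhb : h ∘ b = b := funext fun i => hB _ (hb i)
    simp only [map_evalWord, hhb]

end WordMaps

def Subgroup.IsRetract {G : Type*} [Group G] (H : Subgroup G) : Prop :=
  ∃ r : G →* G, (∀ x, r x ∈ H) ∧ ∀ x ∈ H, r x = x

theorem Subgroup.IsRetract.map_mulEquiv {G K : Type*} [Group G] [Group K] {H : Subgroup G}
    (hH : H.IsRetract) (e : G ≃* K) : (H.map e.toMonoidHom).IsRetract := by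
  obtain ⟨r, hrH, hrfix⟩ := hH
  refine ⟨e.toMonoidHom.comp (r.comp e.symm.toMonoidHom), fun x => ⟨_, hrH _, rfl⟩, ?_⟩
  rintro _ ⟨y, hy, rfl⟩
  simp [hrfix y hy]

theorem FreeGroup.hom_eq_of_forall_mem_toWord {α M : Type*} [DecidableEq α] [Group M]
    {φ ψ : FreeGroup α →* M} {x : FreeGroup α}
    (h : ∀ p ∈ x.toWord, φ (of p.1) = ψ (of p.1)) : φ x = ψ x := by
  rw [← lift.apply_symm_apply φ, ← lift.apply_symm_apply ψ, ← mk_toWord (x := x), lift_mk,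
    lift_mk]
  exact congrArg List.prod (List.map_congr_left fun p hp => by simp [h p hp])

theorem FreeGroup.exists_countable_isRetract_superset {α : Type*} {B : Set (FreeGroup α)}
    (hB : B.Countable) : ∃ H : Subgroup (FreeGroup α), Countable H ∧ B ⊆ H ∧ H.IsRetract := by
  classical
  let S : Set α := ⋃ b ∈ B, Prod.fst '' {p | p ∈ b.toWord}
  have hS : S.Countable := hB.biUnion fun b _ => (b.toWord.finite_toSet.image _).countable
  have : Countable S := hS.to_subtype
  let r : FreeGroup α →* FreeGroup α :=
    (map ((↑) : S → α)).comp (lift fun x => if hx : x ∈ S then of ⟨x, hx⟩ else 1)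
  have hr_map : r.comp (map ((↑) : S → α)) = map ((↑) : S → α) := ext_hom _ _ fun x => by simp [r]
  have hrB : ∀ b ∈ B, r b = b := fun b hb => by
    refine (hom_eq_of_forall_mem_toWord (ψ := MonoidHom.id _) fun p hp => ?_)
    have hpS : p.1 ∈ S := Set.mem_biUnion hb ⟨p, hp, rfl⟩
    simp [r, hpS]
  refine ⟨(map ((↑) : S → α)).range, (Set.countable_range _).to_subtype, fun b hb => ?_,
    r, fun x => ⟨_, rfl⟩, ?_⟩
  · rw [← hrB b hb]
    exact ⟨_, rfl⟩
  · rintro _ ⟨y, rfl⟩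
    exact DFunLike.congr_fun hr_map y

theorem IsFreeGroup.exists_countable_isRetract_superset {G : Type*} [Group G] [IsFreeGroup G]
    {B : Set G} (hB : B.Countable) : ∃ H : Subgroup G, Countable H ∧ B ⊆ H ∧ H.IsRetract := by
  let e : FreeGroup (Generators G) ≃* G := (toFreeGroup G).symm
  obtain ⟨H, hHc, hBH, hH⟩ :=
    FreeGroup.exists_countable_isRetract_superset (hB.image e.symm)
  refine ⟨H.map e.toMonoidHom, (H.equivMapOfInjective _ e.injective).toEquiv.countable_iff.1 hHc,
    fun b hb => ⟨e.symm b, hBH ⟨b, hb, rfl⟩, e.apply_symm_apply b⟩, hH.map_mulEquiv e⟩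

theorem complete_metric_group_not_free_criterion_general
    (G : Type*) [Group G] [MetricSpace G] [CompleteSpace G] [IsTopologicalGroup G]
    (B : Set G) (hBcount : B.Countable)
    (Ξ : Set (Σ k : ℕ, FreeGroup (Fin (k + 1))))
    (hd : ∀ w ∈ Ξ, ∀ b : Fin w.1 → G, (∀ i, b i ∈ B) → ∀ c : G,
      {a : G | evalWord w.2 a b = c}.Finite)
    (he : ∀ A : Set G, A.Finite → ∀ ζ : ℝ, 0 < ζ →
      ∃ w ∈ Ξ, ∃ b : Fin w.1 → G, (∀ i, b i ∈ B) ∧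
        dist (evalWord w.2 1 b) (1 : G) < ζ ∧
        ∀ c : G, evalWord w.2 c b ∉ A) :
    (∀ H : Subgroup G, Countable H → B ⊆ (H : Set G) →
      ¬ ∃ h : G →* G, (∀ x : G, h x ∈ H) ∧ (∀ x ∈ H, h x = x)) ∧
    ¬ IsFreeGroup G := by
  have not_retract : ∀ H : Subgroup G, Countable H → B ⊆ (H : Set G) → ¬ H.IsRetract := by
    rintro H hH hBH ⟨r, hrH, hrfix⟩
    refine not_countable_range_of_forall_mem_apply_eq hd he (fun b hb => hrfix b (hBH hb)) ?_
    exact (Set.to_countable (H : Set G)).mono (Set.range_subset_iff.2 hrH)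
  refine ⟨not_retract, fun _ => ?_⟩
  obtain ⟨H, hH, hBH, hret⟩ := IsFreeGroup.exists_countable_isRetract_superset hBcount
  exact not_retract H hH hBH hret

/-- A criterion for non-freeness of a complete metric group `G`: given a countable set
`B ⊆ G` with the identity in the closure of `B ∖ {1}` and a set `Ξ` of group words
`w(x, ȳ)` such that (d) every equation `w(x, b̄) = c` with `b̄` from `B` has finitely many
solutions, and (e) for every finite `A ⊆ G` and `ζ > 0` there are `w ∈ Ξ` and `b̄` from
`B` with `dist (w(1, b̄), 1) < ζ` and `w(c, b̄) ∉ A` for all `c`; then no countable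
subgroup of `G` containing `B` is a retract of `G`, and consequently `G` is not free. -/
theorem complete_metric_group_not_free_criterion
    (G : Type*) [Group G] [MetricSpace G] [CompleteSpace G] [IsTopologicalGroup G]
    (B : Set G) (hBcount : B.Countable) (hBcl : (1 : G) ∈ closure (B \ {1}))
    (Ξ : Set (Σ k : ℕ, FreeGroup (Fin (k + 1))))
    (hd : ∀ w ∈ Ξ, ∀ b : Fin w.1 → G, (∀ i, b i ∈ B) → ∀ c : G,
      {a : G | evalWord w.2 a b = c}.Finite)
    (he : ∀ A : Set G, A.Finite → ∀ ζ : ℝ, 0 < ζ →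
      ∃ w ∈ Ξ, ∃ b : Fin w.1 → G, (∀ i, b i ∈ B) ∧
        dist (evalWord w.2 1 b) (1 : G) < ζ ∧
        ∀ c : G, evalWord w.2 c b ∉ A) :
    (∀ H : Subgroup G, Countable H → B ⊆ (H : Set G) →
      ¬ ∃ h : G →* G, (∀ x : G, h x ∈ H) ∧ (∀ x ∈ H, h x = x)) ∧
    ¬ IsFreeGroup G :=
  complete_metric_group_not_free_criterion_general G B hBcount Ξ hd he
end
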